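/- arXiv:2503.10295 — 4 statements merged into one kernel-verified Lean document; each statement's English description precedes it below -/
import Mathlib

section
/- Let D be a strong quasi-transitive digraph. Then there exists a strong semicomplete digraph H on h vertices and quasi-transitive digraphs S_1,…,S_h such that D = H[S_1,…,S_h], where each S_i is either a single vertex or a non-strong digraph. -/
/-- A simple digraph: an irreflexive adjacency relation (no loops, no parallel arcs). -/
structure Digr (V : Type) where
  Adj : V → V → Prop
  irrefl : ∀ v, ¬ Adj v v

namespace Digr

variable {V : Type}

/-- `p` is a directed path (as a list of distinct vertices) from `x` to `y`. -/
def IsPathFrom (G : Digr V) (p : List V) (x y : V) : Prop :=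
  p.head? = some x ∧ p.getLast? = some y ∧ p.Chain' G.Adj ∧ p.Nodup

/-- A path from `x` to `y` all of whose vertices lie in `A`. -/
def IsPathOn (G : Digr V) (A : Set V) (p : List V) (x y : V) : Prop :=
  G.IsPathFrom p x y ∧ ∀ v ∈ p, v ∈ A

/-- The digraph restricted to `A` is strongly connected. -/
def StronglyConnectedOn (G : Digr V) (A : Set V) : Prop :=
  ∀ x ∈ A, ∀ y ∈ A, x ≠ y → ∃ p, G.IsPathOn A p x y

/-- A digraph is strong if every ordered pair of distinct vertices is joined by a path. -/
def IsStrong (G : Digr V) : Prop :=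
  ∀ x y : V, x ≠ y → ∃ p, G.IsPathFrom p x y

/-- `G` is `k`-strong: at least `k+1` vertices, and deleting any at most `k-1`
vertices leaves a strongly connected digraph. -/
def KStrong [Fintype V] (G : Digr V) (k : ℕ) : Prop :=
  k + 1 ≤ Fintype.card V ∧
  ∀ S : Finset V, S.card ≤ k - 1 → G.StronglyConnectedOn ((↑S : Set V)ᶜ)

/-- `G` is `k`-linked. -/
def KLinked [Fintype V] (G : Digr V) (k : ℕ) : Prop :=
  2 * k ≤ Fintype.card V ∧
  ∀ x y : Fin k → V, Function.Injective (Sum.elim x y) →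
    ∃ P : Fin k → List V,
      (∀ i, G.IsPathFrom (P i) (x i) (y i)) ∧
      (∀ i j, i ≠ j → ∀ v, v ∈ P i → v ∉ P j)

/-- Semicomplete: at least one arc between any two distinct vertices. -/
def Semicomplete (G : Digr V) : Prop :=
  ∀ x y : V, x ≠ y → G.Adj x y ∨ G.Adj y x

/-- Out-degree of a vertex. -/
noncomputable def outDeg [Fintype V] (G : Digr V) (v : V) : ℕ :=
  Set.ncard {w | G.Adj v w}

/-- In-degree of a vertex. -/
noncomputable def inDeg [Fintype V] (G : Digr V) (v : V) : ℕ :=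
  Set.ncard {w | G.Adj w v}

/-- `G` together with the surjection `φ : V → ι` realizes a composition `H[S₁,…,S_h]`:
between distinct parts, the arcs of `G` are exactly those prescribed by `H`. -/
def IsCompositionOver {ι : Type} (G : Digr V) (H : Digr ι) (φ : V → ι) : Prop :=
  Function.Surjective φ ∧ ∀ u v : V, φ u ≠ φ v → (G.Adj u v ↔ H.Adj (φ u) (φ v))

end Digr

namespace Digr

/-- Quasi-transitive digraph: whenever xy and yz are arcs, x and z are adjacent. -/
def QuasiTransitive {V : Type} (G : Digr V) : Prop :=
  ∀ x y z : V, G.Adj x y → G.Adj y z → x ≠ z → (G.Adj x z ∨ G.Adj z x)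

/-- The subdigraph induced by a set of vertices. -/
def induce {V : Type} (G : Digr V) (A : Set V) : Digr A :=
  ⟨fun a b => G.Adj a b, fun a h => G.irrefl a h⟩

end Digr

/-!
By quasi-transitivity, an out-neighbour `z` of `u` that is adjacent to a non-neighbour `v` of `u`
is also an out-neighbour of `v` (an arc `z → v` would make `u` and `v` adjacent), and dually for
in-neighbours. Hence the connected components of the non-adjacency graph (the complement of the
underlying graph) are modules: collapsing them exhibits `G` as a composition over the quotient
digraph, which is semicomplete because vertices of distinct components are adjacent, and strong
because walks project.

It remains to show that a component with at least two vertices does not induce a strong digraph,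
i.e. that a strong quasi-transitive digraph with connected non-adjacency graph has at most one
vertex.
Shortest walks between non-adjacent vertices `u, v` have length three and produce vertices with
`u, v → a → b → u, v`. If `y` is a vertex whose deletion keeps the non-adjacency graph connected
and `x` is a non-neighbour of `y`, these vertices let one reroute every arc `a → y` into a
walk `a ⇝ x` avoiding `y`, and dually `x ⇝ b` for arcs `y → b`; so `G - y` is again strong, and
induction on the number of vertices applies.
-/

namespace Digr

variable {V : Type}

section

variable (G : Digr V)

def Reachable : V → V → Prop := Relation.ReflTransGen G.Adj

def IsWalk (f : ℕ → V) (n : ℕ) : Prop := ∀ i < n, G.Adj (f i) (f (i + 1))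

def IsShortestWalk (f : ℕ → V) (n : ℕ) : Prop :=
  G.IsWalk f n ∧ ∀ g k, G.IsWalk g k → g 0 = f 0 → g k = f n → n ≤ k

variable {G}

lemma IsWalk.shift {f : ℕ → V} {n i k : ℕ} (hf : G.IsWalk f n) (h : i + k ≤ n) :
    G.IsWalk (fun t => f (i + t)) k :=
  fun t ht => hf (i + t) (by omega)

lemma IsWalk.append {f g : ℕ → V} {m n : ℕ} (hf : G.IsWalk f m) (hg : G.IsWalk g n)
    (h : f m = g 0) : ∃ k, G.IsWalk k (m + n) ∧ k 0 = f 0 ∧ k (m + n) = g n := by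
  refine ⟨fun t => if t ≤ m then f t else g (t - m), fun t ht => ?_, by simp, ?_⟩
  · by_cases htm : t < m
    · simpa [htm.le, Nat.succ_le_of_lt htm] using hf t htm
    · obtain rfl | hlt := eq_or_lt_of_not_gt htm
      · simpa [h] using hg 0 (by omega)
      · simpa [hlt.not_ge, (hlt.trans (Nat.lt_succ_self t)).not_ge, Nat.sub_add_comm hlt.le]
          using hg (t - m) (by omega)
  · rcases Nat.eq_zero_or_pos n with rfl | hn
    · simp [h]
    · simp [show ¬ m + n ≤ m by omega]

lemma Adj.isWalk {a b : V} (h : G.Adj a b) : G.IsWalk (fun t => if t = 0 then a else b) 1 :=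
  fun t ht => by simpa [Nat.lt_one_iff.1 ht] using h

lemma IsWalk.mono {f : ℕ → V} {n k : ℕ} (hf : G.IsWalk f n) (h : k ≤ n) : G.IsWalk f k :=
  fun t ht => hf t (by omega)

lemma Reachable.exists_isWalk {u v : V} (h : G.Reachable u v) :
    ∃ f n, G.IsWalk f n ∧ f 0 = u ∧ f n = v := by
  induction h with
  | refl => exact ⟨fun _ => u, 0, fun _ h => absurd h (Nat.not_lt_zero _), rfl, rfl⟩
  | tail _ hbc ih =>
    obtain ⟨f, n, hf, hf0, hfn⟩ := ih
    obtain ⟨g, hg, hg0, hgn⟩ := hf.append hbc.isWalk (by simpa using hfn)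
    exact ⟨g, n + 1, hg, hg0.trans hf0, by simpa using hgn⟩

lemma Reachable.exists_isShortestWalk {u v : V} (h : G.Reachable u v) :
    ∃ f n, G.IsShortestWalk f n ∧ f 0 = u ∧ f n = v := by
  classical
  have hex : ∃ n f, G.IsWalk f n ∧ f 0 = u ∧ f n = v := by
    obtain ⟨f, n, hf⟩ := h.exists_isWalk
    exact ⟨n, f, hf⟩
  obtain ⟨f, hf, hf0, hfn⟩ := Nat.find_spec hex
  refine ⟨f, _, ⟨hf, fun g k hg hg0 hgk => Nat.find_min' hex ⟨g, hg, ?_, ?_⟩⟩, hf0, hfn⟩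
  · rw [hg0, hf0]
  · rw [hgk, hfn]

/-- Replacing the segment of a shortest walk between positions `i` and `j` by a walk of
length `l` cannot make it shorter. -/
lemma IsShortestWalk.le_of_isWalk {f g : ℕ → V} {n i j l : ℕ} (hf : G.IsShortestWalk f n)
    (hij : i ≤ j) (hjn : j ≤ n) (hg : G.IsWalk g l) (hg0 : g 0 = f i) (hgl : g l = f j) :
    n ≤ i + l + (n - j) := by
  obtain ⟨p, hp, hp0, hpl⟩ := (hf.1.mono (hij.trans hjn)).append hg hg0.symm
  obtain ⟨q, hq, hq0, hql⟩ := hp.append (hf.1.shift (i := j) (k := n - j) (by omega))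
    (by simp [hpl, hgl])
  exact hf.2 q _ hq (hq0.trans hp0) (by simp [hql, show j + (n - j) = n by omega])

lemma IsShortestWalk.ne {f : ℕ → V} {n i j : ℕ} (hf : G.IsShortestWalk f n) (hij : i < j)
    (hjn : j ≤ n) : f i ≠ f j := fun h => by
  have := hf.le_of_isWalk hij.le hjn (g := fun _ => f i) (l := 0)
    (fun _ h => absurd h (Nat.not_lt_zero _)) rfl h
  omega

lemma IsShortestWalk.not_adj {f : ℕ → V} {n i j : ℕ} (hf : G.IsShortestWalk f n)
    (hij : i + 2 ≤ j) (hjn : j ≤ n) : ¬ G.Adj (f i) (f j) := fun h => by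
  have := hf.le_of_isWalk (i := i) (j := j) (by omega) hjn h.isWalk (by simp) (by simp)
  omega

lemma IsShortestWalk.isPathFrom {f : ℕ → V} {n : ℕ} (hf : G.IsShortestWalk f n) :
    G.IsPathFrom ((List.range (n + 1)).map f) (f 0) (f n) := by
  refine ⟨by simp [List.range_succ_eq_map], by simp [List.range_succ], ?_, ?_⟩
  · exact List.isChain_map f |>.2 <| (List.isChain_range_succ _ n).2 hf.1
  · refine List.Nodup.map_on (fun a ha b hb hab => ?_) List.nodup_range
    simp only [List.mem_range] at ha hb
    rcases lt_trichotomy a b with h | h | h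
    · exact absurd hab (hf.ne h (by omega))
    · exact h
    · exact absurd hab.symm (hf.ne h (by omega))

lemma IsPathFrom.reachable {p : List V} {u v : V} (h : G.IsPathFrom p u v) : G.Reachable u v := by
  obtain ⟨hhead, hlast, hchain, -⟩ := h
  obtain ⟨l, rfl⟩ := List.head?_eq_some_iff.1 hhead
  exact List.relationReflTransGen_of_exists_isChain_cons l hchain
    (Option.some_injective _ ((List.getLast?_eq_some_getLast _).symm.trans hlast))

lemma isStrong_iff_reachable : G.IsStrong ↔ ∀ u v, G.Reachable u v := by
  refine ⟨fun h u v => ?_, fun h u v _ => ?_⟩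
  · rcases eq_or_ne u v with rfl | huv
    · exact Relation.ReflTransGen.refl
    · obtain ⟨p, hp⟩ := h u v huv
      exact hp.reachable
  · obtain ⟨f, n, hf, rfl, rfl⟩ := (h u v).exists_isShortestWalk
    exact ⟨_, hf.isPathFrom⟩

end

section

variable {ι : Type} (G : Digr V)

def map (φ : V → ι) : Digr ι where
  Adj a b := a ≠ b ∧ ∃ u v, φ u = a ∧ φ v = b ∧ G.Adj u v
  irrefl _ h := h.1 rfl

variable {G}

lemma IsStrong.map (hs : G.IsStrong) {φ : V → ι} (hφ : Function.Surjective φ) :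
    (G.map φ).IsStrong := by
  rw [isStrong_iff_reachable] at hs ⊢
  intro a b
  obtain ⟨u, rfl⟩ := hφ a
  obtain ⟨v, rfl⟩ := hφ b
  refine Relation.ReflTransGen.lift' φ (fun u v huv => ?_) _ _ (hs u v)
  show Relation.ReflTransGen (G.map φ).Adj (φ u) (φ v)
  by_cases h : φ u = φ v
  · rw [h]
  · exact .single ⟨h, u, v, rfl, rfl, huv⟩

lemma semicomplete_map {φ : V → ι} (hφ : Function.Surjective φ)
    (h : ∀ u v, φ u ≠ φ v → G.Adj u v ∨ G.Adj v u) : (G.map φ).Semicomplete := by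
  intro a b hab
  obtain ⟨u, rfl⟩ := hφ a
  obtain ⟨v, rfl⟩ := hφ b
  exact (h u v hab).imp (fun huv => ⟨hab, u, v, rfl, rfl, huv⟩)
    (fun hvu => ⟨hab.symm, v, u, rfl, rfl, hvu⟩)

lemma isCompositionOver_map {φ : V → ι} (hφ : Function.Surjective φ)
    (h : ∀ u u' v v', φ u = φ u' → φ v = φ v' → φ u ≠ φ v → (G.Adj u v ↔ G.Adj u' v')) :
    G.IsCompositionOver (G.map φ) φ := by
  refine ⟨hφ, fun u v huv => ⟨fun hadj => ⟨huv, u, v, rfl, rfl, hadj⟩, ?_⟩⟩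
  rintro ⟨-, u', v', hu, hv, hadj⟩
  exact (h u u' v v' hu.symm hv.symm huv).2 hadj

end

section

variable (G : Digr V)

def nonadjGraph : SimpleGraph V := (SimpleGraph.fromRel G.Adj)ᶜ

def reverse : Digr V := ⟨fun u v => G.Adj v u, fun v => G.irrefl v⟩

variable {G}

@[simp]
lemma nonadjGraph_adj {u v : V} : G.nonadjGraph.Adj u v ↔ u ≠ v ∧ ¬ G.Adj u v ∧ ¬ G.Adj v u := by
  simp [nonadjGraph]
  tauto

@[simp]
lemma nonadjGraph_reverse : G.reverse.nonadjGraph = G.nonadjGraph := by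
  ext u v
  simp only [nonadjGraph_adj, reverse]
  tauto

lemma nonadjGraph_induce (A : Set V) : (G.induce A).nonadjGraph = G.nonadjGraph.induce A := by
  ext u v
  simp [induce, Subtype.ext_iff]

lemma reachable_reverse {u v : V} : G.reverse.Reachable u v ↔ G.Reachable v u :=
  Relation.reflTransGen_swap

lemma QuasiTransitive.reverse (hqt : G.QuasiTransitive) : G.reverse.QuasiTransitive :=
  fun x y z hxy hyz hxz => hqt z y x hyz hxy hxz.symm

lemma QuasiTransitive.induce (hqt : G.QuasiTransitive) (A : Set V) : (G.induce A).QuasiTransitive :=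
  fun x y z hxy hyz hxz => hqt x y z hxy hyz (Subtype.coe_ne_coe.2 hxz)

lemma adj_or_adj_of_not_reachable {u v : V} (h : ¬ G.nonadjGraph.Reachable u v) :
    G.Adj u v ∨ G.Adj v u := by
  by_contra hnot
  rw [not_or] at hnot
  have huv : u ≠ v := by
    rintro rfl
    exact h SimpleGraph.Reachable.rfl
  exact h (nonadjGraph_adj.2 ⟨huv, hnot⟩).reachable

lemma QuasiTransitive.adj_of_nonadj (hqt : G.QuasiTransitive) {u v z : V}
    (huv : G.nonadjGraph.Adj u v) (huz : G.Adj u z) (hvz : G.Adj v z ∨ G.Adj z v) : G.Adj v z := by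
  rw [nonadjGraph_adj] at huv
  exact hvz.resolve_right fun hzv => (hqt u z v huz hzv huv.1).elim huv.2.1 huv.2.2

lemma QuasiTransitive.adj_iff_of_reachable (hqt : G.QuasiTransitive) {u u' z : V}
    (h : G.nonadjGraph.Reachable u u') (hz : ¬ G.nonadjGraph.Reachable u z) :
    G.Adj u z ↔ G.Adj u' z := by
  rw [SimpleGraph.reachable_iff_reflTransGen] at h
  induction h with
  | refl => rfl
  | tail hub hbc ih =>
    have hb : ¬ G.nonadjGraph.Reachable _ z := fun hbz =>
      hz ((SimpleGraph.reachable_iff_reflTransGen _ _).2 hub |>.trans hbz)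
    have hc : ¬ G.nonadjGraph.Reachable _ z := fun hcz => hb (hbc.reachable.trans hcz)
    rw [ih]
    exact ⟨fun h => hqt.adj_of_nonadj hbc h (adj_or_adj_of_not_reachable hc),
      fun h => hqt.adj_of_nonadj hbc.symm h (adj_or_adj_of_not_reachable hb)⟩

lemma QuasiTransitive.adj_iff_adj_of_reachable (hqt : G.QuasiTransitive) {u u' v v' : V}
    (hu : G.nonadjGraph.Reachable u u') (hv : G.nonadjGraph.Reachable v v')
    (huv : ¬ G.nonadjGraph.Reachable u v) : G.Adj u v ↔ G.Adj u' v' := by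
  have hvu' : ¬ G.reverse.nonadjGraph.Reachable v u' := by
    rw [nonadjGraph_reverse]
    exact fun hvu' => huv (hu.trans hvu'.symm)
  exact (hqt.adj_iff_of_reachable hu huv).trans
    (hqt.reverse.adj_iff_of_reachable (by rwa [nonadjGraph_reverse]) hvu')

/-- A shortest walk `u = f 0 → ⋯ → f m = v` has the back arcs `f (i + 2) → f i`; following them
from `f m` downwards would end in an arc between `u` and `v` unless `m = 3`. -/
theorem QuasiTransitive.exists_adj_adj_of_nonadj (hqt : G.QuasiTransitive)
    (hs : ∀ u v, G.Reachable u v) {u v : V} (huv : G.nonadjGraph.Adj u v) :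
    ∃ a b, G.Adj u a ∧ G.Adj v a ∧ G.Adj a b ∧ G.Adj b u ∧ G.Adj b v := by
  obtain ⟨f, m, hf, rfl, rfl⟩ := (hs u v).exists_isShortestWalk
  obtain ⟨hne, hnot, hnot'⟩ := nonadjGraph_adj.1 huv
  have back : ∀ i, i + 2 ≤ m → G.Adj (f (i + 2)) (f i) := fun i hi =>
    (hqt _ _ _ (hf.1 i (by omega)) (hf.1 (i + 1) (by omega)) (hf.ne (by omega) hi)).resolve_left
      (hf.not_adj le_rfl hi)
  have descend : ∀ k, k + 2 ≤ m → G.Adj (f m) (f (k + 2)) → G.Adj (f m) (f k) := fun k hk h =>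
    (hqt _ _ _ h (back k hk) (hf.ne (by omega) le_rfl).symm).resolve_right (hf.not_adj hk le_rfl)
  have hm3 : 3 ≤ m := by
    by_contra! hm
    interval_cases m
    · exact hne rfl
    · exact hnot (hf.1 0 one_pos)
    · exact hnot' (back 0 le_rfl)
  have reach : ∀ t, 2 * t + 2 ≤ m → G.Adj (f m) (f (m - 2 - 2 * t)) := by
    intro t
    induction t with
    | zero => simpa [Nat.sub_add_cancel (by omega : 2 ≤ m)] using fun _ => back (m - 2) (by omega)
    | succ t ih =>
      intro ht
      refine descend _ (by omega) ?_
      convert ih (by omega) using 3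
      omega
  obtain rfl : m = 3 := by
    by_contra hm
    have hm4 : 4 ≤ m := by omega
    have := reach ((m - 2) / 2) (by omega)
    rcases Nat.even_or_odd m with ⟨r, hr⟩ | ⟨r, hr⟩
    · exact hnot' (by convert this using 2; omega)
    · have h1 : G.Adj (f m) (f 1) := by convert this using 2; omega
      have h2 := (hqt _ _ _ h1 (hf.1 1 (by omega)) (hf.ne (by omega) le_rfl).symm).resolve_right
        (hf.not_adj hm4 le_rfl)
      exact hnot' (descend 0 (by omega) h2)
  exact ⟨f 1, f 2, hf.1 0 (by omega), back 1 le_rfl, hf.1 1 (by omega), back 0 (by omega),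
    hf.1 2 (by omega)⟩

lemma Reachable.exists_reachable_induce_compl_adj {a y : V} (h : G.Reachable a y) (ha : a ≠ y) :
    ∃ b, ∃ hb : b ≠ y, (G.induce {y}ᶜ).Reachable ⟨a, ha⟩ ⟨b, hb⟩ ∧ G.Adj b y := by
  induction h using Relation.ReflTransGen.head_induction_on with
  | refl => exact absurd rfl ha
  | @head a c hac _ ih =>
    by_cases hc : c = y
    · subst hc
      exact ⟨a, ha, .refl, hac⟩
    · obtain ⟨b, hb, hcb, hby⟩ := ih hc
      exact ⟨b, hb, .head (show (G.induce {y}ᶜ).Adj ⟨a, ha⟩ ⟨c, hc⟩ from hac) hcb, hby⟩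

lemma QuasiTransitive.reachable_induce_compl_of_adj (hqt : G.QuasiTransitive)
    (hs : ∀ u v, G.Reachable u v) {x y : V} (hyx : G.nonadjGraph.Adj y x) (hx : x ≠ y)
    {a : V} (ha : a ≠ y) (hay : G.Adj a y) : (G.induce {y}ᶜ).Reachable ⟨a, ha⟩ ⟨x, hx⟩ := by
  obtain ⟨-, hnyx, hnxy⟩ := nonadjGraph_adj.1 hyx
  by_cases hax : G.nonadjGraph.Adj a x
  · obtain ⟨s, t, has, hxs, hst, hta, htx⟩ := hqt.exists_adj_adj_of_nonadj hs hax
    have hsy : s ≠ y := by rintro rfl; exact hnxy hxs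
    have hty : t ≠ y := by rintro rfl; exact hnyx htx
    exact .head (show (G.induce {y}ᶜ).Adj ⟨a, ha⟩ ⟨s, hsy⟩ from has) <|
      .head (show (G.induce {y}ᶜ).Adj ⟨s, hsy⟩ ⟨t, hty⟩ from hst) <|
      .single (show (G.induce {y}ᶜ).Adj ⟨t, hty⟩ ⟨x, hx⟩ from htx)
  · rw [nonadjGraph_adj, not_and_or, not_ne_iff, not_and_or, not_not, not_not] at hax
    rcases hax with rfl | hax | hxa
    · exact .refl
    · exact .single hax
    · exact ((hqt x a y hxa hay hx).elim hnxy hnyx).elim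

lemma QuasiTransitive.reachable_nonadj_induce_compl (hqt : G.QuasiTransitive)
    (hs : ∀ u v, G.Reachable u v) {x y : V} (hyx : G.nonadjGraph.Adj y x) (hx : x ≠ y)
    (a : ({y}ᶜ : Set V)) : (G.induce {y}ᶜ).Reachable a ⟨x, hx⟩ := by
  obtain ⟨b, hb, hab, hby⟩ := (hs a y).exists_reachable_induce_compl_adj a.2
  exact hab.trans (hqt.reachable_induce_compl_of_adj hs hyx hx hb hby)

lemma QuasiTransitive.reachable_induce_compl_singleton (hqt : G.QuasiTransitive)
    (hs : ∀ u v, G.Reachable u v) {x y : V} (hyx : G.nonadjGraph.Adj y x)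
    (a b : ({y}ᶜ : Set V)) : (G.induce {y}ᶜ).Reachable a b := by
  have hx : x ≠ y := (nonadjGraph_adj.1 hyx).1.symm
  have hs' : ∀ u v, G.reverse.Reachable u v := fun u v => reachable_reverse.2 (hs v u)
  have hyx' : G.reverse.nonadjGraph.Adj y x := by rwa [nonadjGraph_reverse]
  exact (hqt.reachable_nonadj_induce_compl hs hyx hx a).trans
    (reachable_reverse.1 (hqt.reverse.reachable_nonadj_induce_compl hs' hyx' hx b))

theorem QuasiTransitive.subsingleton_of_preconnected [Finite V] (hqt : G.QuasiTransitive)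
    (hs : ∀ u v, G.Reachable u v) (hc : G.nonadjGraph.Preconnected) : Subsingleton V := by
  obtain ⟨n, hn⟩ : ∃ n, Nat.card V = n := ⟨_, rfl⟩
  induction n using Nat.strong_induction_on generalizing V with
  | _ n ih =>
  by_contra hV
  rw [not_subsingleton_iff_nontrivial] at hV
  obtain ⟨y, hy⟩ :=
    (SimpleGraph.Connected.mk hc).exists_connected_induce_compl_singleton_of_finite_nontrivial
  obtain ⟨z, hzy⟩ := exists_ne y
  obtain ⟨x, hyx, -⟩ := ((SimpleGraph.reachable_iff_reflTransGen _ _).1 (hc y z)).cases_head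
    |>.resolve_left hzy.symm
  have hx : x ≠ y := (nonadjGraph_adj.1 hyx).1.symm
  have hsub : Subsingleton ({y}ᶜ : Set V) := by
    refine ih _ (hn ▸ Finite.card_subtype_lt (x := y) (by simp)) (hqt.induce _)
      (hqt.reachable_induce_compl_singleton hs hyx) ?_ rfl
    rw [nonadjGraph_induce]
    exact hy.preconnected
  obtain ⟨a, hxa, -⟩ := (hs x y).cases_head.resolve_left hx
  have hay : a ≠ y := by
    rintro rfl
    exact (nonadjGraph_adj.1 hyx).2.2 hxa
  have hxa' : x = a := congrArg Subtype.val (hsub.elim ⟨x, hx⟩ ⟨a, hay⟩)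
  exact G.irrefl a (hxa' ▸ hxa)

end

end Digr

/-- Every strong quasi-transitive digraph D is a composition
H[S₁,…,S_h] where H is a strong semicomplete digraph and each part Sᵢ is a
quasi-transitive digraph which is either a single vertex or non-strong. -/
theorem strong_quasi_transitive_decomposition {V : Type} [Fintype V]
    (G : Digr V) (hqt : G.QuasiTransitive) (hstrong : G.IsStrong) :
    ∃ (ι : Type) (_ : Fintype ι) (H : Digr ι) (φ : V → ι),
      Digr.IsCompositionOver G H φ ∧ H.Semicomplete ∧ H.IsStrong ∧
      (∀ i : ι, (G.induce {v : V | φ v = i}).QuasiTransitive) ∧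
      (∀ i : ι, Set.ncard {v : V | φ v = i} = 1 ∨
        ¬ (G.induce {v : V | φ v = i}).IsStrong) := by
  set φ := G.nonadjGraph.connectedComponentMk
  have hφ : Function.Surjective φ := Quot.exists_rep
  refine ⟨_, Fintype.ofFinite _, G.map φ, φ, Digr.isCompositionOver_map hφ ?_,
    Digr.semicomplete_map hφ ?_, hstrong.map hφ, fun i => hqt.induce _, fun i => ?_⟩
  · exact fun u u' v v' hu hv huv => hqt.adj_iff_adj_of_reachable
      (SimpleGraph.ConnectedComponent.exact hu) (SimpleGraph.ConnectedComponent.exact hv)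
      (mt SimpleGraph.ConnectedComponent.sound huv)
  · exact fun u v huv =>
      Digr.adj_or_adj_of_not_reachable (mt SimpleGraph.ConnectedComponent.sound huv)
  · rw [or_iff_not_imp_right, not_not]
    intro hi
    have : Subsingleton {v | φ v = i} := (hqt.induce {v | φ v = i}).subsingleton_of_preconnected
      (Digr.isStrong_iff_reachable.1 hi)
      (by rw [Digr.nonadjGraph_induce]; exact i.connected_toSimpleGraph.preconnected)
    obtain ⟨v, hv⟩ := hφ i
    exact Set.ncard_eq_one.2 ⟨v, (Set.subsingleton_coe _ |>.1 this).eq_singleton_of_mem hv⟩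
end

section
/- Every semicomplete digraph D contains a nearly in-dominating vertex, i.e., a vertex u such that for every natural number c, all but at most 2c vertices of D are c-good for u. -/
namespace Digr

/-- `v` is c-good for `u` in `G`: either the arc vu is present, or there are at
least c independent (v,u)-paths of length 2 (i.e. c distinct midpoints m with
arcs vm and mu). -/
def CGood {V : Type} (G : Digr V) (c : ℕ) (v u : V) : Prop :=
  G.Adj v u ∨ ∃ M : Finset V, c ≤ M.card ∧ ∀ m ∈ M, G.Adj v m ∧ G.Adj m u

end Digr

/-!
Take `u` of maximum in-degree. If more than `2c` vertices were not `c`-good for `u`, then the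
set `B` of those other than `u` has at least `2c` elements, and since `B` spans a semicomplete
digraph some `v ∈ B` has at least `c` in-neighbours in `B`. As `v` is not `c`-good, `uv` is an arc
and every in-neighbour of `u`, except fewer than `c` midpoints of `(v, u)`-paths, is also an
in-neighbour of `v`. The in-neighbours of `v` in `B` are not in-neighbours of `u`, so together
with `u` itself they outnumber those midpoints, and `v` has larger in-degree than `u`.
-/

open Finset

namespace Digr

variable {V : Type} {G : Digr V}

theorem cGood_zero (v u : V) : G.CGood 0 v u :=
  Or.inr ⟨∅, le_rfl, by simp⟩

theorem Semicomplete.exists_card_le_two_mul_card_filter_adj_add_one [DecidableRel G.Adj]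
    (hsc : G.Semicomplete) {S : Finset V} (hS : S.Nonempty) :
    ∃ v ∈ S, #S ≤ 2 * #{w ∈ S | G.Adj w v} + 1 := by
  classical
  have hcover : ∀ v ∈ S, #S ≤ #{w ∈ S | G.Adj w v} + #{w ∈ S | G.Adj v w} + 1 := by
    intro v hv
    calc #S = #(S.erase v) + 1 := (card_erase_add_one hv).symm
      _ ≤ #({w ∈ S | G.Adj w v} ∪ {w ∈ S | G.Adj v w}) + 1 := by
        gcongr
        intro w hw
        obtain ⟨hwv, hwS⟩ := mem_erase.1 hw
        simpa [hwS] using hsc w v hwv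
      _ ≤ _ := by gcongr; exact card_union_le _ _
  have hswap : ∑ v ∈ S, #{w ∈ S | G.Adj v w} = ∑ v ∈ S, #{w ∈ S | G.Adj w v} := by
    simp only [card_filter]
    exact sum_comm
  refine exists_le_of_sum_le hS ?_
  calc ∑ _ ∈ S, #S ≤ ∑ v ∈ S, (#{w ∈ S | G.Adj w v} + #{w ∈ S | G.Adj v w} + 1) :=
        sum_le_sum hcover
    _ = ∑ v ∈ S, (2 * #{w ∈ S | G.Adj w v} + 1) := by
        simp only [sum_add_distrib, hswap, two_mul]

variable [Fintype V] (G) [DecidableRel G.Adj]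

def inNbrs (v : V) : Finset V := {w | G.Adj w v}

def midpoints (v u : V) : Finset V := {m | G.Adj v m ∧ G.Adj m u}

variable {G}

@[simp]
theorem mem_inNbrs {v w : V} : w ∈ G.inNbrs v ↔ G.Adj w v := by
  simp [inNbrs]

@[simp]
theorem mem_midpoints {v u m : V} : m ∈ G.midpoints v u ↔ G.Adj v m ∧ G.Adj m u := by
  simp [midpoints]

theorem card_midpoints_lt_of_not_cGood {c : ℕ} {v u : V} (h : ¬ G.CGood c v u) :
    #(G.midpoints v u) < c := by
  by_contra! hc
  exact h (Or.inr ⟨_, hc, fun m => mem_midpoints.1⟩)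

theorem Semicomplete.card_inNbrs_le_card_filter_adj_add_card_midpoints (hsc : G.Semicomplete)
    {v u : V} (hvu : ¬ G.Adj v u) :
    #(G.inNbrs u) ≤ #{w ∈ G.inNbrs u | G.Adj w v} + #(G.midpoints v u) := by
  classical
  refine (card_le_card fun m hm => ?_).trans (card_union_le _ _)
  have hmu : G.Adj m u := mem_inNbrs.1 hm
  have hmv : m ≠ v := by rintro rfl; exact hvu hmu
  rcases hsc m v hmv with h | h <;> simp [hmu, h]

theorem Semicomplete.card_inNbrs_lt_of_not_cGood (hsc : G.Semicomplete) {c : ℕ} {v u : V}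
    (hne : v ≠ u) (hbad : ¬ G.CGood c v u) {A : Finset V} (hA : ∀ w ∈ A, G.Adj w v ∧ ¬ G.Adj w u)
    (huA : u ∉ A) (hcA : c ≤ #A) :
    #(G.inNbrs u) < #(G.inNbrs v) := by
  classical
  have hvu : ¬ G.Adj v u := fun h => hbad (Or.inl h)
  have huv : G.Adj u v := (hsc u v hne.symm).resolve_right hvu
  have hdisj : Disjoint {w ∈ G.inNbrs u | G.Adj w v} A :=
    disjoint_left.2 fun w hw hwA => (hA w hwA).2 (mem_inNbrs.1 (mem_filter.1 hw).1)
  have hsub : insert u ({w ∈ G.inNbrs u | G.Adj w v} ∪ A) ⊆ G.inNbrs v := by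
    intro w hw
    rcases mem_insert.1 hw with rfl | hw
    · exact mem_inNbrs.2 huv
    rcases mem_union.1 hw with hw | hw
    · exact mem_inNbrs.2 (mem_filter.1 hw).2
    · exact mem_inNbrs.2 (hA w hw).1
  have huI : u ∉ {w ∈ G.inNbrs u | G.Adj w v} ∪ A := by
    simp [huA, G.irrefl]
  calc #(G.inNbrs u)
      ≤ #{w ∈ G.inNbrs u | G.Adj w v} + #(G.midpoints v u) :=
        hsc.card_inNbrs_le_card_filter_adj_add_card_midpoints hvu
    _ < #{w ∈ G.inNbrs u | G.Adj w v} + #A + 1 := by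
        have := card_midpoints_lt_of_not_cGood hbad
        omega
    _ = #(insert u ({w ∈ G.inNbrs u | G.Adj w v} ∪ A)) := by
        rw [card_insert_of_notMem huI, card_union_of_disjoint hdisj]
    _ ≤ #(G.inNbrs v) := card_le_card hsub

end Digr

/-- Every semicomplete digraph contains a nearly in-dominating
vertex u: for every c ∈ ℕ, all but at most 2c vertices are c-good for u. -/
theorem semicomplete_has_nearly_in_dominating_vertex {V : Type} [Fintype V]
    [Nonempty V] (G : Digr V) (hsc : G.Semicomplete) :
    ∃ u : V, ∀ c : ℕ, Set.ncard {v : V | ¬ G.CGood c v u} ≤ 2 * c := by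
  classical
  obtain ⟨u, -, hu⟩ := exists_max_image univ (fun v => #(G.inNbrs v)) univ_nonempty
  refine ⟨u, fun c => ?_⟩
  rcases Nat.eq_zero_or_pos c with rfl | hc
  · simp [Digr.cGood_zero]
  by_contra! hmany
  set B := ({v | ¬ G.CGood c v u} : Finset V).erase u
  have hB : 2 * c ≤ #B := by
    have hcard : Set.ncard {v | ¬ G.CGood c v u} = #({v | ¬ G.CGood c v u} : Finset V) := by
      rw [← Set.ncard_coe_finset, coe_filter_univ]
    have : #({v | ¬ G.CGood c v u} : Finset V) - 1 ≤ #B := pred_card_le_card_erase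
    omega
  obtain ⟨v, hvB, hv⟩ :=
    hsc.exists_card_le_two_mul_card_filter_adj_add_one (card_pos.1 (by omega : 0 < #B))
  obtain ⟨hvu, hvbad⟩ := mem_erase.1 hvB
  have hA : ∀ w ∈ ({w ∈ B | G.Adj w v} : Finset V), G.Adj w v ∧ ¬ G.Adj w u := by
    simp +contextual [B, Digr.CGood]
  have hlt := hsc.card_inNbrs_lt_of_not_cGood hvu (by simpa using hvbad) hA (by simp [B])
    (by omega)
  exact (hu v (mem_univ v)).not_gt hlt
end

section
/- Let D be a digraph with three pairwise disjoint vertex subsets X, Y and W such that |X| = |Y| = k. Suppose U is a nearly in-dominating set of D \ (X ∪ Y) of order 3k, and Q is a collection of k pairwise vertex-disjoint paths from U to Y having the minimum number of vertices among all such collections. If there exists a set A ⊆ V(D) \ (W ∪ Ini(Q)) of order at most k such that each vertex a ∈ A has at least 7k + 3|W| + 7|A| out-neighbours in D \ (X ∪ Y ∪ U), each of which is a 1-in-dominator of U \ Ini(Q), then A short anchors every subset S ⊆ Ini(Q) \ W with |S| = |A| in the subdigraph of D induced by the vertex set (V(D) \ (V(Q) ∪ W ∪ X)) ∪ (S ∪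 A). -/
namespace Digr

/-- `v` is c-good for `u` in the subdigraph of `G` induced on `A`: either the
arc vu is present, or there are at least c distinct midpoints in `A` giving
independent (v,u)-paths of length 2. -/
def CGoodOn {V : Type} (G : Digr V) (A : Set V) (c : ℕ) (v u : V) : Prop :=
  G.Adj v u ∨ ∃ M : Finset V, c ≤ M.card ∧ ∀ m ∈ M, (m : V) ∈ A ∧ G.Adj v m ∧ G.Adj m u

/-- The set of initial vertices of a collection of paths. -/
def IniSet {V : Type} {k : ℕ} (Q : Fin k → List V) : Set V :=
  {v | ∃ i, (Q i).head? = some v}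

/-- The set of all vertices of a collection of paths. -/
def VSet {V : Type} {k : ℕ} (Q : Fin k → List V) : Set V :=
  {v | ∃ i, v ∈ Q i}

end Digr

namespace Digr

/-- For disjoint vertex sets A and S, A short anchors S within the vertex set T:
for every bijection e from A to S there are pairwise disjoint paths, each of
length at most 3 (at most 4 vertices), with all vertices in T, joining each
a ∈ A to e(a). -/
def ShortAnchorsOn {V : Type} (G : Digr V) (T : Set V) (A S : Finset V) : Prop :=
  ∀ e : {x // x ∈ A} ≃ {y // y ∈ S},
    ∃ P : {x // x ∈ A} → List V,
      (∀ a, G.IsPathOn T (P a) (a : V) ((e a : V)) ∧ (P a).length ≤ 4) ∧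
      (∀ a b, a ≠ b → ∀ v, v ∈ P a → v ∉ P b)

end Digr

/-!
Fix a bijection `e : A ≃ S`; each `a` is joined to `e a` by `a → b a → e a` or, when that arc
is missing, by `a → b a → m a → e a`. Minimality of `Q` keeps the new vertices off `V(Q)`: if a
path of length `ℓ` outside `V(Q)` runs from `U` to the vertex in position `p` of some `Q j`, then
rerouting `Q j` along it shows `p ≤ ℓ`. Hence an out-neighbour `b` of `a` with an in-neighbour in
`U \ Ini(Q)` meets `V(Q)` only as the second vertex of a path (at most `k` vertices), and an
out-neighbour of such a `b` outside `V(Q)` meets `V(Q)` only among the first three vertices of a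
path (at most `3k` vertices).

Order `A` as `a₀, …, a_{m-1}` and put `C = 3k + |W| + 3m`. Pick distinct `bᵢ` among the at
least `7k + 3|W| + 7m` out-neighbours of `aᵢ`, avoiding the at most `2(C - i)` vertices that are
not `(C - i)`-good for `e aᵢ`, the second vertices, `W` and `A`. Then pick distinct midpoints in the
reverse order `i = m-1, …, 0` among the at least `C - i` midpoints from `bᵢ` to `e aᵢ`, avoiding
the first three vertices of the paths, `W`, `A` and all `bⱼ`. In both rounds the `r`-th choice
has more than `r` candidates, so Hall's theorem supplies the distinct choices.
-/

open Finset Function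

theorem Finset.exists_injective_mem_of_rank_lt_card {ι α : Type*} [DecidableEq α]
    (t : ι → Finset α) (r : ι → ℕ) (hr : Injective r) (ht : ∀ i, r i < #(t i)) :
    ∃ f : ι → α, Injective f ∧ ∀ i, f i ∈ t i := by
  classical
  refine (all_card_le_biUnion_card_iff_exists_injective t).1 fun s => ?_
  obtain rfl | hs := s.eq_empty_or_nonempty
  · simp
  obtain ⟨i, hi, hmax⟩ := s.exists_max_image r hs
  have hrange : s.image r ⊆ range (r i + 1) := by
    simpa [subset_iff, Nat.lt_succ_iff] using hmax
  calc #s = #(s.image r) := (card_image_of_injective s hr).symm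
    _ ≤ r i + 1 := by simpa using card_le_card hrange
    _ ≤ #(t i) := ht i
    _ ≤ #(s.biUnion t) := card_le_card (subset_biUnion_of_mem t hi)

namespace Digr

variable {V : Type} {k : ℕ} {G : Digr V}

theorem ne_of_adj {u v : V} (h : G.Adj u v) : u ≠ v := by
  rintro rfl
  exact G.irrefl u h

def IsLinkage (G : Digr V) (U Y : Set V) (Q : Fin k → List V) : Prop :=
  (∀ i, ∃ u ∈ U, ∃ z ∈ Y, G.IsPathFrom (Q i) u z) ∧ ∀ i j, i ≠ j → ∀ v, v ∈ Q i → v ∉ Q j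

def IsMinLinkage (G : Digr V) (U Y : Set V) (Q : Fin k → List V) : Prop :=
  G.IsLinkage U Y Q ∧ ∀ Q' : Fin k → List V, G.IsLinkage U Y Q' →
    ∑ i, (Q i).length ≤ ∑ i, (Q' i).length

section Linkage

variable {U Y : Set V} {Q : Fin k → List V}

theorem iniSet_subset_vSet : IniSet Q ⊆ VSet Q :=
  fun _ ⟨j, hj⟩ => ⟨j, List.mem_of_mem_head? hj⟩

theorem IsLinkage.iniSet_subset (hQ : G.IsLinkage U Y Q) : IniSet Q ⊆ U := by
  rintro v ⟨j, hj⟩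
  obtain ⟨u, hu, z, -, hp⟩ := hQ.1 j
  rwa [← Option.some_inj.1 (hp.1.symm.trans hj)]

theorem IsLinkage.isChain (hQ : G.IsLinkage U Y Q) (j : Fin k) : (Q j).IsChain G.Adj := by
  obtain ⟨_, -, _, -, hp⟩ := hQ.1 j
  exact hp.2.2.1

theorem IsMinLinkage.length_le (hQ : G.IsMinLinkage U Y Q) (j : Fin k) {R : List V} {u z : V}
    (hu : u ∈ U) (hz : z ∈ Y) (hR : G.IsPathFrom R u z)
    (hRQ : ∀ i ≠ j, ∀ v ∈ R, v ∉ Q i) : (Q j).length ≤ R.length := by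
  classical
  have hlink : G.IsLinkage U Y (update Q j R) := by
    refine ⟨fun i => ?_, fun i i' hne v hv hv' => ?_⟩
    · rcases eq_or_ne i j with rfl | hij
      · exact ⟨u, hu, z, hz, by simpa using hR⟩
      · simpa [hij] using hQ.1.1 i
    · rw [update_apply] at hv hv'
      split_ifs at hv hv' with h h'
      · exact hne (h.trans h'.symm)
      · exact hRQ i' h' v hv hv'
      · exact hRQ i h v hv' hv
      · exact hQ.1.2 i i' hne v hv hv'
  have hsum := hQ.2 _ hlink
  simp only [apply_update (fun _ => List.length), sum_update_of_mem (mem_univ j)] at hsum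
  rw [← add_sum_erase _ _ (mem_univ j), ← sdiff_singleton_eq_erase] at hsum
  omega

theorem IsMinLinkage.le_length_of_reroute (hQ : G.IsMinLinkage U Y Q) {j : Fin k} {p : ℕ}
    (hp : p < (Q j).length) {pre : List V} {u : V} (hu : u ∈ U)
    (hhead : (pre ++ (Q j).drop p).head? = some u)
    (hchain : (pre ++ (Q j).drop p).IsChain G.Adj) (hnd : pre.Nodup)
    (hpre : ∀ v ∈ pre, v ∉ VSet Q) : p ≤ pre.length := by
  obtain ⟨_, -, z, hz, hQj⟩ := hQ.1.1 j
  have hR : G.IsPathFrom (pre ++ (Q j).drop p) u z := by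
    refine ⟨hhead, ?_, hchain, ?_⟩
    · simp [List.getLast?_append, List.getLast?_drop, hp.not_ge, hQj.2.1]
    · exact List.nodup_append.2 ⟨hnd, hQj.2.2.2.sublist (List.drop_sublist _ _),
        fun v hv w hw hvw => hpre v hv ⟨j, hvw ▸ List.mem_of_mem_drop hw⟩⟩
  have hlen := hQ.length_le j hu hz hR fun i hij v hv hvi => by
    rcases List.mem_append.1 hv with hv | hv
    · exact hpre v hv ⟨i, hvi⟩
    · exact hQ.1.2 j i hij.symm v (List.mem_of_mem_drop hv) hvi
  simp only [List.length_append, List.length_drop] at hlen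
  omega

theorem IsMinLinkage.mem_iniSet (hQ : G.IsMinLinkage U Y Q) {u : V} (hu : u ∈ U)
    (huQ : u ∈ VSet Q) : u ∈ IniSet Q := by
  obtain ⟨j, hj⟩ := huQ
  obtain ⟨p, hp, rfl⟩ := List.mem_iff_getElem.1 hj
  have h0 := hQ.le_length_of_reroute hp (pre := []) hu (by simp [List.head?_drop])
    (by simpa using (hQ.1.isChain j).drop p) List.nodup_nil (by simp)
  obtain rfl : p = 0 := by simpa using h0
  exact ⟨j, by simp [List.head?_eq_getElem?]⟩

theorem IsMinLinkage.getElem?_one_eq_of_adj (hQ : G.IsMinLinkage U Y Q) {z b : V} (hz : z ∈ U)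
    (hzQ : z ∉ IniSet Q) (hzb : G.Adj z b) (hb : b ∉ U) {j : Fin k} (hbj : b ∈ Q j) :
    (Q j)[1]? = some b := by
  obtain ⟨p, hp, rfl⟩ := List.mem_iff_getElem.1 hbj
  have hzV : z ∉ VSet Q := fun h => hzQ (hQ.mem_iniSet hz h)
  have h1 := hQ.le_length_of_reroute hp (pre := [z]) hz rfl
    (List.isChain_cons.2 ⟨by simpa [List.head?_drop, List.getElem?_eq_getElem hp] using hzb,
      (hQ.1.isChain j).drop p⟩)
    (List.nodup_singleton z) (by simpa using hzV)
  have hp0 : p ≠ 0 := by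
    rintro rfl
    exact hb (hQ.1.iniSet_subset ⟨j, by simp [List.head?_eq_getElem?]⟩)
  obtain rfl : p = 1 := by simp only [List.length_singleton] at h1; omega
  simp

theorem IsMinLinkage.mem_take_three_of_adj_adj (hQ : G.IsMinLinkage U Y Q) {z b w : V}
    (hz : z ∈ U) (hzQ : z ∉ IniSet Q) (hzb : G.Adj z b) (hbQ : b ∉ VSet Q) (hbw : G.Adj b w)
    {j : Fin k} (hwj : w ∈ Q j) : w ∈ (Q j).take 3 := by
  obtain ⟨p, hp, rfl⟩ := List.mem_iff_getElem.1 hwj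
  have hzV : z ∉ VSet Q := fun h => hzQ (hQ.mem_iniSet hz h)
  have h2 := hQ.le_length_of_reroute hp (pre := [z, b]) hz rfl
    (List.isChain_cons_cons.2 ⟨hzb,
      List.isChain_cons.2 ⟨by simpa [List.head?_drop, List.getElem?_eq_getElem hp] using hbw,
        (hQ.1.isChain j).drop p⟩⟩)
    (by simpa using ne_of_adj hzb) (by simp [hzV, hbQ])
  simp only [List.length_cons, List.length_nil] at h2
  exact List.mem_take_iff_getElem.2 ⟨p, by omega, rfl⟩

variable [DecidableEq V]

def secondVertices (Q : Fin k → List V) : Finset V :=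
  univ.biUnion fun j => (Q j)[1]?.toFinset

def frontVertices (Q : Fin k → List V) (r : ℕ) : Finset V :=
  univ.biUnion fun j => ((Q j).take r).toFinset

theorem card_secondVertices_le : #(secondVertices Q) ≤ k :=
  card_biUnion_le.trans <| by
    simpa using sum_le_sum (s := univ) fun j _ => show #(Q j)[1]?.toFinset ≤ 1 by
      cases (Q j)[1]? <;> simp

theorem card_frontVertices_le (r : ℕ) : #(frontVertices Q r) ≤ r * k :=
  card_biUnion_le.trans <| by
    simpa [mul_comm] using sum_le_sum (s := univ) fun j _ =>
      (List.toFinset_card_le ((Q j).take r)).trans (List.length_take_le r (Q j))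

theorem IsMinLinkage.mem_secondVertices_of_adj (hQ : G.IsMinLinkage U Y Q) {z b : V}
    (hz : z ∈ U) (hzQ : z ∉ IniSet Q) (hzb : G.Adj z b) (hb : b ∉ U) (hbQ : b ∈ VSet Q) :
    b ∈ secondVertices Q := by
  obtain ⟨j, hj⟩ := hbQ
  simpa [secondVertices] using ⟨j, hQ.getElem?_one_eq_of_adj hz hzQ hzb hb hj⟩

theorem IsMinLinkage.mem_frontVertices_of_adj_adj (hQ : G.IsMinLinkage U Y Q) {z b w : V}
    (hz : z ∈ U) (hzQ : z ∉ IniSet Q) (hzb : G.Adj z b) (hbQ : b ∉ VSet Q) (hbw : G.Adj b w)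
    (hwQ : w ∈ VSet Q) : w ∈ frontVertices Q 3 := by
  obtain ⟨j, hj⟩ := hwQ
  simpa [frontVertices] using ⟨j, hQ.mem_take_three_of_adj_adj hz hzQ hzb hbQ hbw hj⟩

end Linkage

section AnchorPath

variable {A S : Finset V}

open Classical in
noncomputable def anchorPath (G : Digr V) (e : A ≃ S) (b : A → V)
    (md : {x : A // ¬ G.Adj (b x) (e x)} → V) (x : A) : List V :=
  if h : G.Adj (b x) (e x) then [x, b x, e x] else [x, b x, md ⟨x, h⟩, e x]

variable {e : A ≃ S} {b : A → V} {md : {x : A // ¬ G.Adj (b x) (e x)} → V}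

theorem length_anchorPath_le (x : A) : (anchorPath G e b md x).length ≤ 4 := by
  unfold anchorPath; split_ifs <;> simp

/- The inner vertices of all anchor paths form the family `Sum.elim b md`; the index
`j : A ⊕ {x // ¬ G.Adj (b x) (e x)}` lies on the path of `Sum.elim id Subtype.val j`. -/
theorem mem_anchorPath {x : A} {v : V} (hv : v ∈ anchorPath G e b md x) :
    v = x ∨ v = e x ∨ ∃ j, Sum.elim id Subtype.val j = x ∧ Sum.elim b md j = v := by
  unfold anchorPath at hv
  split_ifs at hv with h
  · simp only [List.mem_cons, List.not_mem_nil, or_false] at hv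
    rcases hv with rfl | rfl | rfl
    · exact .inl rfl
    · exact .inr (.inr ⟨.inl x, rfl, rfl⟩)
    · exact .inr (.inl rfl)
  · simp only [List.mem_cons, List.not_mem_nil, or_false] at hv
    rcases hv with rfl | rfl | rfl | rfl
    · exact .inl rfl
    · exact .inr (.inr ⟨.inl x, rfl, rfl⟩)
    · exact .inr (.inr ⟨.inr ⟨x, h⟩, rfl, rfl⟩)
    · exact .inr (.inl rfl)

theorem isPathOn_anchorPath {T : Set V} (hAT : ↑A ⊆ T) (hST : ↑S ⊆ T) (hAS : Disjoint A S)
    (hb : ∀ x : A, G.Adj x (b x)) (hmd : ∀ y, G.Adj (b y.1) (md y) ∧ G.Adj (md y) (e y.1))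
    (hinner : ∀ j, Sum.elim b md j ∈ T ∧ Sum.elim b md j ∉ A ∧ Sum.elim b md j ∉ S) (x : A) :
    G.IsPathOn T (anchorPath G e b md x) x (e x) := by
  have hxS : (x : V) ∉ S := disjoint_left.1 hAS x.2
  have hxA := hAT x.2
  have hexS := hST (e x).2
  obtain ⟨hbT, hbA, hbS⟩ : b x ∈ T ∧ b x ∉ A ∧ b x ∉ S := hinner (.inl x)
  have hxb : (x : V) ≠ b x := ne_of_mem_of_not_mem x.2 hbA
  have hbe : b x ≠ e x := (ne_of_mem_of_not_mem (e x).2 hbS).symm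
  have hxe : (x : V) ≠ e x := (ne_of_mem_of_not_mem (e x).2 hxS).symm
  unfold anchorPath
  split_ifs with h
  · refine ⟨⟨rfl, rfl, ?_, ?_⟩, ?_⟩
    · exact List.isChain_cons_cons.2 ⟨hb x, List.isChain_pair.2 h⟩
    · simp [hxb, hxe, hbe]
    · simp_all
  · obtain ⟨hmT, hmA, hmS⟩ := hinner (.inr ⟨x, h⟩)
    obtain ⟨hbm, hme⟩ := hmd ⟨x, h⟩
    have hxm : (x : V) ≠ md ⟨x, h⟩ := ne_of_mem_of_not_mem x.2 hmA
    refine ⟨⟨rfl, rfl, ?_, ?_⟩, ?_⟩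
    · exact List.isChain_cons_cons.2
        ⟨hb x, List.isChain_cons_cons.2 ⟨hbm, List.isChain_pair.2 hme⟩⟩
    · simp [hxb, hxe, hbe, hxm, ne_of_adj hbm, ne_of_adj hme]
    · simp_all

theorem anchorPath_disjoint (hAS : Disjoint A S) (hinj : Injective (Sum.elim b md))
    (hinner : ∀ j, Sum.elim b md j ∉ A ∧ Sum.elim b md j ∉ S) {x y : A} (hxy : x ≠ y) {v : V}
    (hvx : v ∈ anchorPath G e b md x) : v ∉ anchorPath G e b md y := by
  intro hvy
  rcases mem_anchorPath hvx with rfl | rfl | ⟨i, rfl, rfl⟩ <;>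
    rcases mem_anchorPath hvy with h | h | ⟨j, rfl, h⟩
  · exact hxy (Subtype.ext h)
  · exact disjoint_left.1 hAS x.2 (h ▸ (e y).2)
  · exact (hinner j).1 (h ▸ x.2)
  · exact disjoint_left.1 hAS y.2 (h ▸ (e x).2)
  · exact hxy (e.injective (Subtype.ext h))
  · exact (hinner j).2 (h ▸ (e x).2)
  · exact (hinner i).1 (h ▸ y.2)
  · exact (hinner i).2 (h ▸ (e y).2)
  · obtain rfl := hinj h
    exact hxy rfl

end AnchorPath

section Selection

variable [Fintype V] [DecidableEq V] {X Y W U A : Finset V} {Q : Fin k → List V}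

theorem exists_good_outNeighbours (hQ : G.IsMinLinkage ↑U ↑Y Q)
    (hUdom : ∀ u ∈ U, ∀ c : ℕ, Set.ncard {v : V | v ∉ X ∪ Y ∧ v ∉ U ∧
      ¬ G.CGoodOn ((↑(X ∪ Y) : Set V)ᶜ) c v u} ≤ 2 * c)
    (hAdeg : ∀ a ∈ A, ∃ B : Finset V, 7 * k + 3 * #W + 7 * #A ≤ #B ∧
      ∀ b ∈ B, G.Adj a b ∧ b ∉ X ∪ Y ∪ U ∧ ∃ z ∈ U, z ∉ IniSet Q ∧ G.Adj z b)
    (s : A → V) (hs : ∀ x, s x ∈ U) (σ : A ≃ Fin #A) :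
    ∃ b : A → V, Injective b ∧ (∀ x : A, G.Adj x (b x)) ∧
      (∀ x, b x ∉ VSet Q ∧ b x ∉ W ∧ b x ∉ X ∧ b x ∉ A) ∧
      (∀ x, ∃ z ∈ U, z ∉ IniSet Q ∧ G.Adj z (b x)) ∧
      ∀ x, G.CGoodOn (↑(X ∪ Y))ᶜ (3 * k + #W + 3 * #A - σ x) (b x) (s x) := by
  classical
  choose B hBcard hB using hAdeg
  set C := 3 * k + #W + 3 * #A
  let nonGood (c : ℕ) (u : V) : Finset V :=
    {v | v ∉ X ∪ Y ∧ v ∉ U ∧ ¬ G.CGoodOn (↑(X ∪ Y))ᶜ c v u}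
  let bad (x : A) : Finset V := nonGood (C - σ x) (s x) ∪ secondVertices Q ∪ W ∪ A.erase x
  have hbad (x : A) : #(bad x) ≤ 2 * (C - σ x) + k + #W + (#A - 1) := by
    have hng : #(nonGood (C - σ x) (s x)) ≤ 2 * (C - σ x) := by
      simpa [nonGood, Set.ncard_eq_toFinset_card'] using hUdom _ (hs x) (C - σ x)
    grw [card_union_le, card_union_le, card_union_le, hng, card_secondVertices_le,
      card_erase_of_mem x.2]
  have hcand (x : A) : (σ x : ℕ) < #(B x x.2 \ bad x) :=
    calc (σ x : ℕ) < #(B x x.2) - #(bad x) := by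
          have := hBcard x x.2
          have := hbad x
          have := (σ x).isLt
          omega
      _ ≤ #(B x x.2 \ bad x) := le_card_sdiff _ _
  obtain ⟨b, hbinj, hbmem⟩ := exists_injective_mem_of_rank_lt_card _ (fun x => σ x)
    (Fin.val_injective.comp σ.injective) hcand
  have hbB (x : A) := (hB x x.2 _ (mem_sdiff.1 (hbmem x)).1)
  have hbbad (x : A) : b x ∉ bad x := (mem_sdiff.1 (hbmem x)).2
  simp only [bad, mem_union, mem_erase, not_or, not_and] at hbbad
  simp only [mem_union, not_or] at hbB
  refine ⟨b, hbinj, fun x => (hbB x).1, fun x => ⟨fun h => ?_, (hbbad x).1.2, (hbB x).2.1.1.1,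
    (hbbad x).2 (ne_of_adj (hbB x).1).symm⟩, fun x => (hbB x).2.2, fun x => ?_⟩
  · obtain ⟨-, ⟨-, hbU⟩, z, hz, hzQ, hzb⟩ := hbB x
    exact (hbbad x).1.1.2 (hQ.mem_secondVertices_of_adj hz hzQ hzb hbU h)
  · by_contra hng
    obtain ⟨-, ⟨⟨hbX, hbY⟩, hbU⟩, -⟩ := hbB x
    exact (hbbad x).1.1.1 (mem_filter.2 ⟨mem_univ _, by simp [hbX, hbY], hbU, hng⟩)

theorem exists_midpoints (hQ : G.IsMinLinkage ↑U ↑Y Q) (b s : A → V)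
    (hbQ : ∀ x, b x ∉ VSet Q) (hbdom : ∀ x, ∃ z ∈ U, z ∉ IniSet Q ∧ G.Adj z (b x))
    (σ : A ≃ Fin #A)
    (hgood : ∀ x, G.CGoodOn (↑(X ∪ Y))ᶜ (3 * k + #W + 3 * #A - σ x) (b x) (s x)) :
    ∃ md : {x : A // ¬ G.Adj (b x) (s x)} → V, Injective md ∧
      (∀ y : {x : A // ¬ G.Adj (b x) (s x)}, G.Adj (b y) (md y) ∧ G.Adj (md y) (s y)) ∧
      (∀ y, md y ∉ VSet Q ∧ md y ∉ W ∧ md y ∉ X ∧ md y ∉ A) ∧ ∀ y x, md y ≠ b x := by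
  classical
  set C := 3 * k + #W + 3 * #A
  let mids (x : A) : Finset V := {w | w ∉ X ∪ Y ∧ G.Adj (b x) w ∧ G.Adj w (s x)}
  let bad : Finset V := frontVertices Q 3 ∪ W ∪ A ∪ univ.image b
  have hbad : #bad ≤ 3 * k + #W + #A + #A := by
    grw [card_union_le, card_union_le, card_union_le, card_frontVertices_le, card_image_le]
    simp [mul_comm]
  have hmids (y : {x : A // ¬ G.Adj (b x) (s x)}) : C - σ y ≤ #(mids y) := by
    obtain h | ⟨M, hM, hMmid⟩ := hgood y
    · exact absurd h y.2
    refine hM.trans (card_le_card fun w hw => ?_)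
    obtain ⟨hwXY, hbw, hws⟩ := hMmid w hw
    simpa [mids, hbw, hws] using hwXY
  have hcand (y : {x : A // ¬ G.Adj (b x) (s x)}) : #A - 1 - σ y < #(mids y \ bad) :=
    calc #A - 1 - σ y < #(mids y) - #bad := by
          have := hmids y
          have := (σ y).isLt
          omega
      _ ≤ #(mids y \ bad) := le_card_sdiff _ _
  have hrank : Injective fun y : {x : A // ¬ G.Adj (b x) (s x)} => #A - 1 - σ y := by
    intro y y' h
    have := (σ y).isLt
    have := (σ y').isLt
    exact Subtype.ext (σ.injective (Fin.ext (by simp only at h; omega)))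
  obtain ⟨md, hmdinj, hmdmem⟩ := exists_injective_mem_of_rank_lt_card _ _ hrank hcand
  have hmid (y : {x : A // ¬ G.Adj (b x) (s x)}) := (mem_sdiff.1 (hmdmem y)).1
  have hmbad (y : {x : A // ¬ G.Adj (b x) (s x)}) : md y ∉ bad := (mem_sdiff.1 (hmdmem y)).2
  simp only [mids, mem_filter, mem_univ, true_and, mem_union, not_or] at hmid
  simp only [bad, mem_union, mem_image, mem_univ, true_and, not_or, not_exists] at hmbad
  refine ⟨md, hmdinj, fun y => (hmid y).2, fun y => ⟨fun h => ?_, (hmbad y).1.1.2,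
    (hmid y).1.1, (hmbad y).1.2⟩, fun y x h => (hmbad y).2 x h.symm⟩
  obtain ⟨z, hz, hzQ, hzb⟩ := hbdom y
  exact (hmbad y).1.1.1 (hQ.mem_frontVertices_of_adj_adj hz hzQ hzb (hbQ y) (hmid y).2.1 h)

end Selection

end Digr

open Digr

theorem short_anchor_lemma_general {V : Type} [Fintype V] [DecidableEq V] (G : Digr V) (k : ℕ)
    (X Y W : Finset V)
    -- U is a nearly in-dominating set of D \ (X ∪ Y) of order 3k:
    (U : Finset V)
    (hUdom : ∀ u ∈ U, ∀ c : ℕ,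
      Set.ncard {v : V | v ∉ X ∪ Y ∧ v ∉ U ∧
        ¬ G.CGoodOn ((↑(X ∪ Y) : Set V)ᶜ) c v u} ≤ 2 * c)
    -- Q is a collection of k disjoint paths from U to Y with minimum number of vertices:
    (Q : Fin k → List V)
    (hQpaths : ∀ i, ∃ u ∈ U, ∃ z ∈ Y, G.IsPathFrom (Q i) u z)
    (hQdisj : ∀ i j, i ≠ j → ∀ v, v ∈ Q i → v ∉ Q j)
    (hQmin : ∀ Q' : Fin k → List V,
      (∀ i, ∃ u ∈ U, ∃ z ∈ Y, G.IsPathFrom (Q' i) u z) →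
      (∀ i j, i ≠ j → ∀ v, v ∈ Q' i → v ∉ Q' j) →
      (∑ i, (Q i).length) ≤ (∑ i, (Q' i).length))
    -- A ⊆ V(D) \ (W ∪ Ini(Q)) of order at most k, such that each a ∈ A has at
    -- least 7k + 3|W| + 7|A| out-neighbours in D \ (X ∪ Y ∪ U), each of which
    -- is a 1-in-dominator of U \ Ini(Q):
    (A : Finset V)
    (hAsub : ∀ a ∈ A, a ∉ W ∧ (a : V) ∉ Digr.IniSet Q)
    (hAdeg : ∀ a ∈ A, ∃ B : Finset V,
      7 * k + 3 * W.card + 7 * A.card ≤ B.card ∧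
      ∀ b ∈ B, G.Adj a b ∧ b ∉ X ∪ Y ∪ U ∧
        ∃ z ∈ U, (z : V) ∉ Digr.IniSet Q ∧ G.Adj z b) :
    -- Conclusion: A short anchors every S ⊆ Ini(Q) \ W with |S| = |A| in the
    -- subdigraph induced by (V(D) \ (V(Q) ∪ W ∪ X)) ∪ (S ∪ A):
    ∀ S : Finset V, (↑S : Set V) ⊆ Digr.IniSet Q \ ↑W → S.card = A.card →
      G.ShortAnchorsOn
        ((Set.univ \ (Digr.VSet Q ∪ ↑W ∪ ↑X)) ∪ (↑S ∪ ↑A)) A S := by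
  intro S hS _ e
  set T : Set V := (Set.univ \ (VSet Q ∪ ↑W ∪ ↑X)) ∪ (↑S ∪ ↑A)
  have hQ : G.IsMinLinkage ↑U ↑Y Q := ⟨⟨hQpaths, hQdisj⟩, fun Q' h => hQmin Q' h.1 h.2⟩
  have hSQ (y : S) : (y : V) ∈ IniSet Q := (hS y.2).1
  have hAS : Disjoint A S := disjoint_right.2 fun y hy hyA => (hAsub y hyA).2 (hSQ ⟨y, hy⟩)
  obtain ⟨b, hbinj, hbadj, hbfree, hbdom, hbgood⟩ := exists_good_outNeighbours hQ hUdom hAdeg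
    (fun x => e x) (fun x => hQ.1.iniSet_subset (hSQ (e x))) A.equivFin
  obtain ⟨md, hmdinj, hmdadj, hmdfree, hmdb⟩ :=
    exists_midpoints hQ b (fun x => e x) (fun x => (hbfree x).1) hbdom A.equivFin hbgood
  have hfree {v : V} : v ∉ VSet Q ∧ v ∉ W ∧ v ∉ X ∧ v ∉ A → v ∈ T ∧ v ∉ A ∧ v ∉ S :=
    fun ⟨hvQ, hvW, hvX, hvA⟩ => ⟨.inl ⟨trivial, by simp [hvQ, hvW, hvX]⟩, hvA,
      fun hvS => hvQ (iniSet_subset_vSet (hSQ ⟨v, hvS⟩))⟩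
  have hinner : ∀ j, Sum.elim b md j ∈ T ∧ Sum.elim b md j ∉ A ∧ Sum.elim b md j ∉ S := by
    rintro (x | y)
    exacts [hfree (hbfree x), hfree (hmdfree y)]
  have hinj : Injective (Sum.elim b md) :=
    hbinj.sumElim hmdinj fun x y h => hmdb y x h.symm
  refine ⟨anchorPath G e b md, fun x => ⟨?_, length_anchorPath_le x⟩,
    fun x y hxy v => anchorPath_disjoint hAS hinj (fun j => (hinner j).2) hxy⟩
  exact isPathOn_anchorPath (fun v hv => .inr (.inr hv)) (fun v hv => .inr (.inl hv)) hAS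
    hbadj hmdadj hinner x

/-- Lemma 2.2. -/
theorem short_anchor_lemma {V : Type} [Fintype V] [DecidableEq V] (G : Digr V) (k : ℕ)
    (X Y W : Finset V)
    (hXY : Disjoint X Y) (hXW : Disjoint X W) (hYW : Disjoint Y W)
    (hX : X.card = k) (hY : Y.card = k)
    -- U is a nearly in-dominating set of D \ (X ∪ Y) of order 3k:
    (U : Finset V) (hUcard : U.card = 3 * k)
    (hUsub : ∀ u ∈ U, u ∉ X ∪ Y)
    (hUdom : ∀ u ∈ U, ∀ c : ℕ,
      Set.ncard {v : V | v ∉ X ∪ Y ∧ v ∉ U ∧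
        ¬ G.CGoodOn ((↑(X ∪ Y) : Set V)ᶜ) c v u} ≤ 2 * c)
    -- Q is a collection of k disjoint paths from U to Y with minimum number of vertices:
    (Q : Fin k → List V)
    (hQpaths : ∀ i, ∃ u ∈ U, ∃ z ∈ Y, G.IsPathFrom (Q i) u z)
    (hQdisj : ∀ i j, i ≠ j → ∀ v, v ∈ Q i → v ∉ Q j)
    (hQmin : ∀ Q' : Fin k → List V,
      (∀ i, ∃ u ∈ U, ∃ z ∈ Y, G.IsPathFrom (Q' i) u z) →
      (∀ i j, i ≠ j → ∀ v, v ∈ Q' i → v ∉ Q' j) →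
      (∑ i, (Q i).length) ≤ (∑ i, (Q' i).length))
    -- A ⊆ V(D) \ (W ∪ Ini(Q)) of order at most k, such that each a ∈ A has at
    -- least 7k + 3|W| + 7|A| out-neighbours in D \ (X ∪ Y ∪ U), each of which
    -- is a 1-in-dominator of U \ Ini(Q):
    (A : Finset V) (hAcard : A.card ≤ k)
    (hAsub : ∀ a ∈ A, a ∉ W ∧ (a : V) ∉ Digr.IniSet Q)
    (hAdeg : ∀ a ∈ A, ∃ B : Finset V,
      7 * k + 3 * W.card + 7 * A.card ≤ B.card ∧
      ∀ b ∈ B, G.Adj a b ∧ b ∉ X ∪ Y ∪ U ∧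
        ∃ z ∈ U, (z : V) ∉ Digr.IniSet Q ∧ G.Adj z b) :
    -- Conclusion: A short anchors every S ⊆ Ini(Q) \ W with |S| = |A| in the
    -- subdigraph induced by (V(D) \ (V(Q) ∪ W ∪ X)) ∪ (S ∪ A):
    ∀ S : Finset V, (↑S : Set V) ⊆ Digr.IniSet Q \ ↑W → S.card = A.card →
      G.ShortAnchorsOn
        ((Set.univ \ (Digr.VSet Q ∪ ↑W ∪ ↑X)) ∪ (↑S ∪ ↑A)) A S :=
  short_anchor_lemma_general G k X Y W U hUdom Q hQpaths hQdisj hQmin A hAsub hAdeg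
end

section
/- Let l be an integer with l ≥ 2. Suppose D is an l-quasi-transitive digraph containing a directed (u, v)-path for vertices u, v. If the distance d(u, v) from u to v satisfies d(u, v) ≥ l, then d(v, u) ≤ l + 1. -/
namespace Digr

/-- An l-quasi-transitive digraph: whenever there is a path of length l (i.e. with
l arcs, hence l+1 vertices) from u to v, the vertices u and v are adjacent. -/
def LQuasiTransitive {V : Type} (G : Digr V) (l : ℕ) : Prop :=
  ∀ u v : V, (∃ p : List V, G.IsPathFrom p u v ∧ p.length = l + 1) →
    (G.Adj u v ∨ G.Adj v u)

end Digr

/-! Take a shortest `(u, v)`-path `x₀ → x₁ → ⋯ → xₙ`, so `n ≥ l`, and work with its indices.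
By minimality there is no arc `xᵢ → xⱼ` with `j > i + 1`, so `l`-quasi-transitivity applied to
the subpath `xⱼ → ⋯ → xⱼ₊ₗ` forces the backward arc `xⱼ₊ₗ → xⱼ`. Descending from `xₙ₋ₗ` in steps
of two, `v = xₙ` has an arc to every `xₘ` with `m ≡ n - l (mod 2)`: the path
`v → xₘ₊₂ → ⋯ → xₘ₊ₗ → xₘ` has length `l`, and its ends cannot be joined by a forward arc.
Finally `v → x₀ = u`, or `v → x₁ → ⋯ → xₗ → x₀` has length `l + 1`. -/

namespace Digr

variable {V W : Type}

theorem isPathFrom_singleton (G : Digr V) (a : V) : G.IsPathFrom [a] a a :=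
  ⟨rfl, rfl, List.isChain_singleton a, List.nodup_singleton a⟩

theorem IsPathFrom.append {G : Digr V} {p q : List V} {a b c d : V} (hp : G.IsPathFrom p a b)
    (hq : G.IsPathFrom q c d) (hbc : G.Adj b c) (hpq : p.Disjoint q) :
    G.IsPathFrom (p ++ q) a d := by
  obtain ⟨hph, hpl, hpc, hpn⟩ := hp
  obtain ⟨hqh, hql, hqc, hqn⟩ := hq
  refine ⟨by simp [List.head?_append, hph], by simp [List.getLast?_append, hql], ?_,
    hpn.append hqn hpq⟩
  exact hpc.append hqc (by simp [hpl, hqh, hbc])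

-- Restricting to `s` lets a map that is injective only on `s` carry paths back to `G`.
def comapOn (G : Digr V) (f : W → V) (s : Set W) : Digr W where
  Adj i j := i ∈ s ∧ j ∈ s ∧ G.Adj (f i) (f j)
  irrefl i h := G.irrefl (f i) h.2.2

section comapOn

variable {G : Digr V} {f : W → V} {s : Set W} {p : List W} {a b : W}

theorem IsPathFrom.forall_mem_of_comapOn (hp : (G.comapOn f s).IsPathFrom p a b) (ha : a ∈ s) :
    ∀ i ∈ p, i ∈ s := by
  obtain ⟨t, rfl⟩ := List.head?_eq_some_iff.1 hp.1
  exact hp.2.2.1.induction _ _ (fun _ _ hxy _ => hxy.2.1) fun _ => ha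

theorem IsPathFrom.map_of_comapOn (hp : (G.comapOn f s).IsPathFrom p a b) (ha : a ∈ s)
    (hf : Set.InjOn f s) : G.IsPathFrom (p.map f) (f a) (f b) := by
  have hs := hp.forall_mem_of_comapOn ha
  obtain ⟨hh, hl, hc, hnd⟩ := hp
  exact ⟨by simp [hh], by simp [hl], (List.isChain_map f).2 (hc.imp fun _ _ h => h.2.2),
    hnd.map_on fun x hx y hy => hf (hs x hx) (hs y hy)⟩

theorem LQuasiTransitive.comapOn {l : ℕ} (hG : G.LQuasiTransitive l) (hl : 0 < l)
    (hf : Set.InjOn f s) : (G.comapOn f s).LQuasiTransitive l := by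
  rintro a b ⟨p, hp, hlen⟩
  have ha : a ∈ s := by
    obtain ⟨t, rfl⟩ := List.head?_eq_some_iff.1 hp.1
    obtain ⟨c, t, rfl⟩ : ∃ c t', t = c :: t' :=
      List.exists_cons_of_length_pos (by simp only [List.length_cons] at hlen; omega)
    exact (List.isChain_cons_cons.1 hp.2.2.1).1.1
  have hb : b ∈ s := hp.forall_mem_of_comapOn ha b (List.mem_of_getLast? hp.2.1)
  rcases hG (f a) (f b) ⟨p.map f, hp.map_of_comapOn ha hf, by simp [hlen]⟩ with h | h
  exacts [Or.inl ⟨ha, hb, h⟩, Or.inr ⟨hb, ha, h⟩]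

end comapOn

theorem IsPathFrom.exists_seq {G : Digr V} {p : List V} {a b : V} {n : ℕ}
    (hp : G.IsPathFrom p a b) (hn : p.length = n + 1) :
    ∃ x : ℕ → V, x 0 = a ∧ x n = b ∧ (∀ i < n, G.Adj (x i) (x (i + 1))) ∧
      Set.InjOn x (Set.Iic n) := by
  obtain ⟨hh, hl, hc, hnd⟩ := hp
  have hx : ∀ i (hi : i ≤ n), p.getD i a = p[i] := fun _ _ =>
    List.getD_eq_getElem _ _ (by omega)
  refine ⟨fun i => p.getD i a, ?_, ?_, fun i hi => ?_, fun i hi j hj hij => ?_⟩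
  · simpa [hx 0 n.zero_le, List.head?_eq_getElem?, List.getElem?_eq_getElem, hn] using hh
  · simpa [hx n le_rfl, List.getLast?_eq_getElem?, List.getElem?_eq_getElem, hn] using hl
  · show G.Adj (p.getD i a) (p.getD (i + 1) a)
    rw [hx i hi.le, hx (i + 1) hi]
    exact List.isChain_iff_getElem.1 hc i (by omega)
  · simp only [hx i hi, hx j hj] at hij
    exact hnd.getElem_inj_iff.1 hij

section IndexedPath

variable {H : Digr ℕ} {n : ℕ}

theorem isPathFrom_range' (hstep : ∀ i < n, H.Adj i (i + 1)) {a b : ℕ} (hab : a ≤ b)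
    (hbn : b ≤ n) : H.IsPathFrom (List.range' a (b + 1 - a)) a b := by
  refine ⟨by rw [List.head?_range', if_neg (by omega)], ?_, ?_, List.nodup_range'⟩
  · rw [List.getLast?_range', if_neg (by omega), show a + (b + 1 - a) - 1 = b by omega]
  · refine (List.isChain_range' a _ 1).imp_of_mem_imp fun i j _ hj hij => ?_
    rw [List.mem_range'_1] at hj
    exact hij ▸ hstep i (by omega)

theorem isPathFrom_detour (hstep : ∀ i < n, H.Adj i (i + 1)) {m a b : ℕ} (hna : H.Adj n a)
    (hbm : H.Adj b m) (hma : m < a) (hab : a ≤ b) (hbn : b < n) :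
    H.IsPathFrom ([n] ++ List.range' a (b + 1 - a) ++ [m]) n m :=
  ((isPathFrom_singleton H n).append (isPathFrom_range' hstep hab hbn.le) hna
    (by simp only [List.singleton_disjoint, List.mem_range'_1]; omega)).append
    (isPathFrom_singleton H m) hbm
    (by simp only [List.disjoint_singleton, List.mem_append, List.mem_singleton,
      List.mem_range'_1]; omega)

structure IsShortestRangePath (H : Digr ℕ) (n : ℕ) : Prop where
  adj_succ : ∀ i < n, H.Adj i (i + 1)
  le_length : ∀ p, H.IsPathFrom p 0 n → n + 1 ≤ p.length

namespace IsShortestRangePath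

variable {l : ℕ}

theorem not_adj_of_succ_lt (hH : H.IsShortestRangePath n) {i j : ℕ} (hij : i + 1 < j)
    (hjn : j ≤ n) : ¬ H.Adj i j := fun hadj => by
  have hp := (isPathFrom_range' hH.adj_succ i.zero_le (by omega)).append
    (isPathFrom_range' hH.adj_succ hjn le_rfl) hadj
    (by simp only [List.disjoint_left, List.mem_range'_1]; omega)
  have := hH.le_length _ hp
  simp only [List.length_append, List.length_range'] at this
  omega

theorem adj_add_self (hH : H.IsShortestRangePath n) (hqt : H.LQuasiTransitive l) (hl : 2 ≤ l)
    {j : ℕ} (hj : j + l ≤ n) : H.Adj (j + l) j :=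
  (hqt j (j + l) ⟨_, isPathFrom_range' hH.adj_succ (by omega) hj,
    by rw [List.length_range']; omega⟩).resolve_left
    (hH.not_adj_of_succ_lt (by omega) hj)

theorem adj_last_of_add_two_mul (hH : H.IsShortestRangePath n) (hqt : H.LQuasiTransitive l)
    (hl : 2 ≤ l) : ∀ t m, m + 2 * t + l = n → H.Adj n m
  | 0, m, h => by simpa [← h] using hH.adj_add_self hqt hl (j := m) (by omega)
  | t + 1, m, h => by
    have hnext := hH.adj_last_of_add_two_mul hqt hl t (m + 2) (by omega)
    have hback := hH.adj_add_self hqt hl (j := m) (by omega)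
    have hp := isPathFrom_detour hH.adj_succ hnext hback (by omega) (by omega) (by omega)
    have hlen : ([n] ++ List.range' (m + 2) (m + l + 1 - (m + 2)) ++ [m]).length = l + 1 := by
      simp only [List.length_append, List.length_singleton, List.length_range']; omega
    exact (hqt n m ⟨_, hp, hlen⟩).resolve_right
      (hH.not_adj_of_succ_lt (by omega) le_rfl)

theorem exists_isPathFrom_last_zero (hH : H.IsShortestRangePath n)
    (hqt : H.LQuasiTransitive l) (hl : 2 ≤ l) (hln : l ≤ n) :
    ∃ p, H.IsPathFrom p n 0 ∧ p.length ≤ l + 2 := by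
  obtain ⟨t, ht | ht⟩ := Nat.even_or_odd' (n - l)
  · have hn0 := hH.adj_last_of_add_two_mul hqt hl t 0 (by omega)
    exact ⟨_, (isPathFrom_singleton H n).append (isPathFrom_singleton H 0) hn0
      (by simp only [List.disjoint_singleton, List.mem_singleton]; omega), by simp⟩
  · have hn1 := hH.adj_last_of_add_two_mul hqt hl t 1 (by omega)
    have hl0 := hH.adj_add_self hqt hl (j := 0) (by omega)
    rw [zero_add] at hl0
    exact ⟨_, isPathFrom_detour hH.adj_succ hn1 hl0 one_pos (by omega) (by omega), by simp⟩

end IsShortestRangePath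

end IndexedPath

end Digr

/-- In an l-quasi-transitive digraph (l ≥ 2), if there is a
(u,v)-path and d(u,v) ≥ l (every (u,v)-path has at least l arcs, i.e. at least
l+1 vertices), then d(v,u) ≤ l+1 (there is a (v,u)-path with at most l+1 arcs,
i.e. at most l+2 vertices). -/
theorem l_quasi_transitive_distance {V : Type} (l : ℕ) (hl : 2 ≤ l)
    (G : Digr V) (hqt : G.LQuasiTransitive l) (u v : V)
    (hpath : ∃ p : List V, G.IsPathFrom p u v)
    (hdist : ∀ p : List V, G.IsPathFrom p u v → l + 1 ≤ p.length) :
    ∃ p : List V, G.IsPathFrom p v u ∧ p.length ≤ l + 2 := by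
  obtain ⟨p, hp, hmin⟩ :=
    (InvImage.wf List.length wellFounded_lt).has_min {p | G.IsPathFrom p u v} hpath
  have hlp := hdist p hp
  obtain ⟨n, hn⟩ : ∃ n, p.length = n + 1 := Nat.exists_eq_add_one.2 (by omega)
  obtain ⟨x, hx0, hxn, hstep, hinj⟩ := hp.exists_seq hn
  have hH : (G.comapOn x (Set.Iic n)).IsShortestRangePath n := by
    refine ⟨fun i hi => ⟨hi.le, hi, hstep i hi⟩, fun q hq => ?_⟩
    have hGq := hx0 ▸ hxn ▸ hq.map_of_comapOn n.zero_le hinj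
    simpa [hn] using not_lt.1 (hmin (q.map x) hGq)
  obtain ⟨q, hq, hlen⟩ :=
    hH.exists_isPathFrom_last_zero (hqt.comapOn (by omega) hinj) hl (by omega)
  exact ⟨q.map x, hx0 ▸ hxn ▸ hq.map_of_comapOn Set.self_mem_Iic hinj, by simpa using hlen⟩
end
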